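/- Let (Ω, P) be a probability space, τ > 0, and p ∈ (0,1). For each integer k ≥ 1 let A_k, B_k : Ω → {0,1} be random variables with A_k B_k = 0, E[A_k] = p^{2k−1}, and E[B_k] = (1−p)^{2k−1}. Let M : Ω → ℕ take values in {1, 2, …}, set q_k := P(M ≥ k), assume q_k > 0 for all k, and assume that for each k the event {M ≥ k} is independent of the pair (A_k, B_k). Let (c_{2k−1})_{k≥1} be real coefficients and let α := max{p, 1−p}; assume ∑_{k=1}^∞ |c_{2k−1}| α^{2k−1} < ∞. Then the random variable Δ̂ := τ ∑_{k=1}^{M} (c_{2k−1}/q_k)(A_k − B_k) is integrable and E[Δ̂] = τ ∑_{k=1}^∞ c_{2k−1} (p^{2k−1} − (1−p)^{2k−1}). -/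

import Mathlib

/-!
Unroll `Δ̂ / τ` into the series `∑ⱼ 1{M ≥ j} (c_j / q_j) (A_j - B_j)`. Since `{M ≥ j}` is
independent of `(A_j, B_j)` and has probability `q_j`, the reweighting by `1 / q_j` makes each
term an unbiased estimator of `c_j (p^(2j-1) - (1-p)^(2j-1))`, and the same independence bounds
its `L¹` norm by `|c_j| (p^(2j-1) + (1-p)^(2j-1)) ≤ 2 |c_j| α^(2j-1)`. These norms are summable,
so the series is integrable and may be integrated term by term.
-/

open MeasureTheory ProbabilityTheory
open scoped ENNReal

section
variable {α E : Type*} [MeasurableSpace α] {μ : Measure α} [NormedAddCommGroup E] [CompleteSpace E]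

theorem integrable_tsum_of_summable_integral_norm {F : ℕ → α → E}
    (hF_int : ∀ i, Integrable (F i) μ) (hF_sum : Summable fun i ↦ ∫ a, ‖F i a‖ ∂μ) :
    Integrable (fun a ↦ ∑' i, F i a) μ := by
  have hF_meas : ∀ i, AEMeasurable (fun a ↦ ‖F i a‖ₑ) μ :=
    fun i ↦ (hF_int i).aestronglyMeasurable.enorm
  have hlint : ∫⁻ a, ∑' i, ‖F i a‖ₑ ∂μ ≠ ∞ := by
    rw [lintegral_tsum hF_meas]
    simp_rw [← ofReal_integral_norm_eq_lintegral_enorm (hF_int _)]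
    rw [← ENNReal.ofReal_tsum_of_nonneg (fun i ↦ integral_nonneg fun _ ↦ norm_nonneg _) hF_sum]
    exact ENNReal.ofReal_ne_top
  have hsum : ∀ᵐ a ∂μ, Summable fun i ↦ F i a := by
    filter_upwards [ae_lt_top' (AEMeasurable.tsum hF_meas) hlint] with a ha
    exact (tsum_enorm_ne_top_iff_summable_norm.1 ha.ne).of_norm
  refine ⟨aestronglyMeasurable_of_tendsto_ae Filter.atTop
    (fun n ↦ Finset.aestronglyMeasurable_fun_sum _ fun i _ ↦ (hF_int i).aestronglyMeasurable)
    (hsum.mono fun a ha ↦ ha.hasSum.tendsto_sum_nat), ?_⟩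
  exact (lintegral_mono fun a ↦ enorm_tsum_le_tsum_enorm).trans_lt hlint.lt_top

end

section
variable {Ω : Type*} [MeasurableSpace Ω] {P : Measure Ω} {S : Set Ω} {A B : Ω → ℝ}

theorem integrable_of_forall_eq_zero_or_eq_one [IsFiniteMeasure P] {X : Ω → ℝ}
    (hX : Measurable X) (h01 : ∀ ω, X ω = 0 ∨ X ω = 1) : Integrable X P :=
  .of_mem_Icc 0 1 hX.aemeasurable <| ae_of_all _ fun ω ↦ by rcases h01 ω with h | h <;> simp [h]

theorem integrable_indicator_one_mul (hS : MeasurableSet S) {Y : Ω → ℝ} (hY : Integrable Y P) :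
    Integrable (fun ω ↦ S.indicator (fun _ ↦ 1) ω * Y ω) P := by
  refine (hY.indicator hS).congr (ae_of_all _ fun ω ↦ ?_)
  by_cases h : ω ∈ S <;> simp [h]

theorem integral_indicator_one_mul_of_indepFun (hS : MeasurableSet S) {Y : Ω → ℝ}
    (hY : AEStronglyMeasurable Y P) (hind : IndepFun (S.indicator fun _ ↦ (1 : ℝ)) Y P) :
    ∫ ω, S.indicator (fun _ ↦ 1) ω * Y ω ∂P = P.real S * ∫ ω, Y ω ∂P := by
  rw [hind.integral_fun_mul_eq_mul_integral (aestronglyMeasurable_const.indicator hS) hY,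
    integral_indicator_const _ hS, smul_eq_mul, mul_one]

variable (hS : MeasurableSet S) (hA : Integrable A P) (hB : Integrable B P)
  (hind : IndepFun (S.indicator fun _ ↦ (1 : ℝ)) (fun ω ↦ (A ω, B ω)) P)
include hS hA hB hind

theorem integral_indicator_one_mul_div_sub_of_indepFun (hPS : P.real S ≠ 0) (w : ℝ) :
    ∫ ω, S.indicator (fun _ ↦ 1) ω * (w / P.real S * (A ω - B ω)) ∂P =
      w * ((∫ ω, A ω ∂P) - ∫ ω, B ω ∂P) := by
  have hind' := hind.comp measurable_id (measurable_fst.sub measurable_snd)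
  simp_rw [mul_left_comm _ (w / P.real S), integral_const_mul]
  rw [integral_indicator_one_mul_of_indepFun (Y := fun ω ↦ A ω - B ω) hS
    (hA.sub hB).aestronglyMeasurable hind', integral_sub hA hB, ← mul_assoc, div_mul_cancel₀ _ hPS]

theorem integral_norm_indicator_one_mul_div_sub_le_of_indepFun (hA0 : ∀ ω, 0 ≤ A ω)
    (hB0 : ∀ ω, 0 ≤ B ω) (w : ℝ) :
    ∫ ω, ‖S.indicator (fun _ ↦ 1) ω * (w / P.real S * (A ω - B ω))‖ ∂P ≤
      |w| * ((∫ ω, A ω ∂P) + ∫ ω, B ω ∂P) := by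
  have hind' := hind.comp measurable_id (measurable_fst.add measurable_snd)
  have hAB (ω : Ω) : |A ω - B ω| ≤ A ω + B ω :=
    abs_sub_le_iff.2 ⟨by linarith [hB0 ω], by linarith [hA0 ω]⟩
  have hw : |w / P.real S| * P.real S ≤ |w| := by
    rw [abs_div, abs_of_nonneg measureReal_nonneg]
    rcases measureReal_nonneg.eq_or_lt with h | h
    · rw [← h, mul_zero]
      exact abs_nonneg w
    · rw [div_mul_cancel₀ _ h.ne']
  calc ∫ ω, ‖S.indicator (fun _ ↦ 1) ω * (w / P.real S * (A ω - B ω))‖ ∂P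
      ≤ ∫ ω, |w / P.real S| * (S.indicator (fun _ ↦ 1) ω * (A ω + B ω)) ∂P := by
        refine integral_mono (integrable_indicator_one_mul hS ((hA.sub hB).const_mul _)).norm
          ((integrable_indicator_one_mul hS (hA.add hB)).const_mul _) fun ω ↦ ?_
        by_cases h : ω ∈ S
        · rw [Set.indicator_of_mem h, one_mul, one_mul, Real.norm_eq_abs, abs_mul]
          exact mul_le_mul_of_nonneg_left (hAB ω) (abs_nonneg _)
        · simp [h]
    _ = |w / P.real S| * P.real S * ((∫ ω, A ω ∂P) + ∫ ω, B ω ∂P) := by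
      rw [integral_const_mul, integral_indicator_one_mul_of_indepFun (Y := fun ω ↦ A ω + B ω) hS
        (hA.add hB).aestronglyMeasurable hind', integral_add hA hB, mul_assoc]
    _ ≤ |w| * ((∫ ω, A ω ∂P) + ∫ ω, B ω ∂P) :=
      mul_le_mul_of_nonneg_right hw <|
        add_nonneg (integral_nonneg hA0) (integral_nonneg hB0)

end

theorem tsum_indicator_mul_eq_sum_Icc {Ω : Type*} (M : Ω → ℕ) (f : ℕ → ℝ) (ω : Ω) :
    ∑' j, {ω | j + 1 ≤ M ω}.indicator (fun _ ↦ (1 : ℝ)) ω * f (j + 1) =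
      ∑ k ∈ Finset.Icc 1 (M ω), f k := by
  rw [tsum_eq_sum (s := Finset.range (M ω)) fun j hj ↦ ?_]
  · rw [← Finset.Ico_add_one_right_eq_Icc, Finset.sum_Ico_eq_sum_range, add_tsub_cancel_right]
    refine Finset.sum_congr rfl fun j hj ↦ ?_
    rw [Set.indicator_of_mem (by simpa using hj), one_mul, add_comm]
  · rw [Set.indicator_of_notMem (by simpa using hj), zero_mul]

theorem pow_add_pow_le_two_mul_max_pow {x y : ℝ} (hx : 0 ≤ x) (hy : 0 ≤ y) (n : ℕ) :
    x ^ n + y ^ n ≤ 2 * max x y ^ n := by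
  have := pow_le_pow_left₀ hx (le_max_left x y) n
  have := pow_le_pow_left₀ hy (le_max_right x y) n
  linarith

theorem general_link_russian_roulette_unbiased_general
    {Ω : Type*} [MeasurableSpace Ω] (P : Measure Ω) [IsProbabilityMeasure P]
    (τ p : ℝ) (hp0 : 0 < p) (hp1 : p < 1)
    (A B : ℕ → Ω → ℝ)
    (hABmeas : ∀ k, 1 ≤ k → Measurable (A k) ∧ Measurable (B k))
    (hA01 : ∀ k, 1 ≤ k → ∀ ω, A k ω = 0 ∨ A k ω = 1)
    (hB01 : ∀ k, 1 ≤ k → ∀ ω, B k ω = 0 ∨ B k ω = 1)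
    (hAmean : ∀ k, 1 ≤ k → (∫ ω, A k ω ∂P) = p ^ (2 * k - 1))
    (hBmean : ∀ k, 1 ≤ k → (∫ ω, B k ω ∂P) = (1 - p) ^ (2 * k - 1))
    (M : Ω → ℕ) (hM : Measurable M)
    (q : ℕ → ℝ) (hq : ∀ k, q k = (P {ω | k ≤ M ω}).toReal)
    (hqpos : ∀ k, 1 ≤ k → 0 < q k)
    (hindep : ∀ k, 1 ≤ k →
      IndepFun (Set.indicator {ω | k ≤ M ω} (fun _ => (1 : ℝ)))
        (fun ω => (A k ω, B k ω)) P)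
    (c : ℕ → ℝ) (α : ℝ) (hα : α = max p (1 - p))
    (habs : Summable fun k : ℕ => |c (k + 1)| * α ^ (2 * k + 1))
    (Δhat : Ω → ℝ)
    (hΔhat : ∀ ω, Δhat ω = τ * ∑ k ∈ Finset.Icc 1 (M ω), (c k / q k) * (A k ω - B k ω)) :
    Integrable Δhat P ∧
      (∫ ω, Δhat ω ∂P) =
        τ * ∑' k : ℕ, c (k + 1) * (p ^ (2 * k + 1) - (1 - p) ^ (2 * k + 1)) := by
  have hq' (k : ℕ) : q k = P.real {ω | k ≤ M ω} := hq k
  simp_rw [hq'] at hΔhat hqpos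
  set F : ℕ → Ω → ℝ := fun j ω ↦ {ω | j + 1 ≤ M ω}.indicator (fun _ ↦ 1) ω *
    (c (j + 1) / P.real {ω | j + 1 ≤ M ω} * (A (j + 1) ω - B (j + 1) ω))
  have hS (k : ℕ) : MeasurableSet {ω | k ≤ M ω} := hM measurableSet_Ici
  have hA (k : ℕ) (hk : 1 ≤ k) : Integrable (A k) P :=
    integrable_of_forall_eq_zero_or_eq_one (hABmeas k hk).1 (hA01 k hk)
  have hB (k : ℕ) (hk : 1 ≤ k) : Integrable (B k) P :=
    integrable_of_forall_eq_zero_or_eq_one (hABmeas k hk).2 (hB01 k hk)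
  have hA0 (k : ℕ) (hk : 1 ≤ k) (ω : Ω) : 0 ≤ A k ω := by rcases hA01 k hk ω with h | h <;> simp [h]
  have hB0 (k : ℕ) (hk : 1 ≤ k) (ω : Ω) : 0 ≤ B k ω := by rcases hB01 k hk ω with h | h <;> simp [h]
  have hexp (j : ℕ) : 2 * (j + 1) - 1 = 2 * j + 1 := by omega
  have hF_int (j : ℕ) : Integrable (F j) P :=
    integrable_indicator_one_mul (hS _) (((hA _ j.succ_pos).sub (hB _ j.succ_pos)).const_mul _)
  have hF_integral (j : ℕ) :
      ∫ ω, F j ω ∂P = c (j + 1) * (p ^ (2 * j + 1) - (1 - p) ^ (2 * j + 1)) := by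
    rw [integral_indicator_one_mul_div_sub_of_indepFun (hS _) (hA _ j.succ_pos) (hB _ j.succ_pos)
      (hindep _ j.succ_pos) (hqpos _ j.succ_pos).ne', hAmean _ j.succ_pos, hBmean _ j.succ_pos,
      hexp]
  have hF_norm (j : ℕ) : ∫ ω, ‖F j ω‖ ∂P ≤ 2 * (|c (j + 1)| * α ^ (2 * j + 1)) := by
    refine (integral_norm_indicator_one_mul_div_sub_le_of_indepFun (hS _) (hA _ j.succ_pos)
      (hB _ j.succ_pos) (hindep _ j.succ_pos) (hA0 _ j.succ_pos) (hB0 _ j.succ_pos) _).trans ?_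
    rw [hAmean _ j.succ_pos, hBmean _ j.succ_pos, hexp, hα, mul_left_comm]
    exact mul_le_mul_of_nonneg_left
      (pow_add_pow_le_two_mul_max_pow hp0.le (sub_nonneg.2 hp1.le) _) (abs_nonneg _)
  have hF_sum : Summable fun j ↦ ∫ ω, ‖F j ω‖ ∂P :=
    (habs.mul_left 2).of_nonneg_of_le (fun j ↦ integral_nonneg fun _ ↦ norm_nonneg _) hF_norm
  have hΔ : Δhat = fun ω ↦ τ * ∑' j, F j ω :=
    funext fun ω ↦ by
      rw [hΔhat, ← tsum_indicator_mul_eq_sum_Icc M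
        (fun k ↦ c k / P.real {ω | k ≤ M ω} * (A k ω - B k ω)) ω]
  refine ⟨hΔ ▸ (integrable_tsum_of_summable_integral_norm hF_int hF_sum).const_mul τ, ?_⟩
  rw [hΔ, integral_const_mul, ← integral_tsum_of_summable_integral_norm hF_int hF_sum]
  simp_rw [hF_integral]

/-- **Unbiasedness of the general-link Russian-roulette gap estimator.** Let `τ > 0`,
`p ∈ (0,1)`, and for each `k ≥ 1` let `A k, B k : Ω → {0,1}` be random variables with
`A k * B k = 0`, `E[A k] = p^(2k-1)` and `E[B k] = (1-p)^(2k-1)`. Let `M : Ω → ℕ` take values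
in `{1,2,…}`, set `q k := P(M ≥ k) > 0`, and assume the event `{M ≥ k}` is independent of the
pair `(A k, B k)`. Let `(c k)` be coefficients (with `c k` playing the role of `c_{2k-1}`),
`α := max p (1-p)`, and assume `∑_{k≥1} |c k| α^(2k-1) < ∞`. Then
`Δ̂ := τ ∑_{k=1}^{M} (c k / q k) (A k - B k)` is integrable and
`E[Δ̂] = τ ∑_{k≥1} c k (p^(2k-1) - (1-p)^(2k-1))`. -/
theorem general_link_russian_roulette_unbiased
    {Ω : Type*} [MeasurableSpace Ω] (P : Measure Ω) [IsProbabilityMeasure P]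
    (τ p : ℝ) (hτ : 0 < τ) (hp0 : 0 < p) (hp1 : p < 1)
    (A B : ℕ → Ω → ℝ)
    (hABmeas : ∀ k, 1 ≤ k → Measurable (A k) ∧ Measurable (B k))
    (hA01 : ∀ k, 1 ≤ k → ∀ ω, A k ω = 0 ∨ A k ω = 1)
    (hB01 : ∀ k, 1 ≤ k → ∀ ω, B k ω = 0 ∨ B k ω = 1)
    (hAB0 : ∀ k, 1 ≤ k → ∀ ω, A k ω * B k ω = 0)
    (hAmean : ∀ k, 1 ≤ k → (∫ ω, A k ω ∂P) = p ^ (2 * k - 1))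
    (hBmean : ∀ k, 1 ≤ k → (∫ ω, B k ω ∂P) = (1 - p) ^ (2 * k - 1))
    (M : Ω → ℕ) (hM : Measurable M) (hM1 : ∀ ω, 1 ≤ M ω)
    (q : ℕ → ℝ) (hq : ∀ k, q k = (P {ω | k ≤ M ω}).toReal)
    (hqpos : ∀ k, 1 ≤ k → 0 < q k)
    (hindep : ∀ k, 1 ≤ k →
      IndepFun (Set.indicator {ω | k ≤ M ω} (fun _ => (1 : ℝ)))
        (fun ω => (A k ω, B k ω)) P)
    (c : ℕ → ℝ) (α : ℝ) (hα : α = max p (1 - p))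
    (habs : Summable fun k : ℕ => |c (k + 1)| * α ^ (2 * k + 1))
    (Δhat : Ω → ℝ)
    (hΔhat : ∀ ω, Δhat ω = τ * ∑ k ∈ Finset.Icc 1 (M ω), (c k / q k) * (A k ω - B k ω)) :
    Integrable Δhat P ∧
      (∫ ω, Δhat ω ∂P) =
        τ * ∑' k : ℕ, c (k + 1) * (p ^ (2 * k + 1) - (1 - p) ^ (2 * k + 1)) :=
  general_link_russian_roulette_unbiased_general P τ p hp0 hp1 A B hABmeas hA01 hB01 hAmean hBmean M
    hM q hq hqpos hindep c α hα habs Δhat hΔhat
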